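/- Scalar-output version of Theorem 1: Let Φ ∈ ℝ^{p×T} with Φ Φᵀ positive definite, X ∈ ℝ^T, γ_w > 0, and D ∈ ℝ^{p×p} positive definite. Suppose Φ Φᵀ ⪰ (γ_w − Xᵀ X + Xᵀ Φᵀ (Φ Φᵀ)⁻¹ Φ X) · D. Then every θ ∈ ℝ^p with Σ_{k} (X_k − Φ_kᵀ θ)² ≤ γ_w (Φ_k denotes the k-th column of Φ) satisfies (θ − θ̂)ᵀ D (θ − θ̂) ≤ 1, where θ̂ = (Φ Φᵀ)⁻¹ Φ X. In particular the least-squares estimate achieves the exploration goal for the true parameter. -/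

import Mathlib

open Matrix Finset

/-! Since `θhat` solves the normal equations, the residual `X - Φᵀ θ` splits orthogonally into the
least-squares residual and `Φᵀ (θ - θhat)`, so the hypothesis on `θ` says exactly
`(θ - θhat)ᵀ Φ Φᵀ (θ - θhat) ≤ c`, where `c` is the scalar in the LMI. Evaluating the LMI at
`θ - θhat` gives `c (θ - θhat)ᵀ D (θ - θhat) ≤ (θ - θhat)ᵀ Φ Φᵀ (θ - θhat) ≤ c`, and `c > 0` unless
`θ = θhat`. -/

namespace Matrix

section LeastSquares

variable {R m n : Type*} [CommRing R] [Fintype m] [Fintype n]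

theorem dotProduct_transpose_mulVec_eq_zero {Φ : Matrix m n R} {r : n → R} (h : Φ *ᵥ r = 0)
    (w : m → R) : r ⬝ᵥ Φᵀ *ᵥ w = 0 := by
  rw [dotProduct_mulVec, vecMul_transpose, h, zero_dotProduct]

theorem mulVec_sub_transpose_mulVec_nonsing_inv_eq_zero [DecidableEq m] (Φ : Matrix m n R)
    (X : n → R) (h : IsUnit (Φ * Φᵀ).det) :
    Φ *ᵥ (X - Φᵀ *ᵥ ((Φ * Φᵀ)⁻¹ *ᵥ (Φ *ᵥ X))) = 0 := by
  rw [mulVec_sub, mulVec_mulVec, mulVec_mulVec, mul_nonsing_inv _ h, one_mulVec, sub_self]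

variable {Φ : Matrix m n R} {X : n → R} {θhat : m → R}

theorem dotProduct_self_sub_transpose_mulVec_eq_add_of_normal_eq
    (h : Φ *ᵥ (X - Φᵀ *ᵥ θhat) = 0) (θ : m → R) :
    (X - Φᵀ *ᵥ θ) ⬝ᵥ (X - Φᵀ *ᵥ θ) =
      (X - Φᵀ *ᵥ θhat) ⬝ᵥ (X - Φᵀ *ᵥ θhat) + (θ - θhat) ⬝ᵥ (Φ * Φᵀ) *ᵥ (θ - θhat) := by
  set r := X - Φᵀ *ᵥ θhat
  set w := θ - θhat
  have hsplit : X - Φᵀ *ᵥ θ = r - Φᵀ *ᵥ w := by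
    simp only [r, w, mulVec_sub]; abel
  have hgram : (Φᵀ *ᵥ w) ⬝ᵥ (Φᵀ *ᵥ w) = w ⬝ᵥ (Φ * Φᵀ) *ᵥ w := by
    rw [dotProduct_mulVec, vecMul_transpose, mulVec_mulVec, dotProduct_comm]
  rw [hsplit]
  simp only [sub_dotProduct, dotProduct_sub]
  rw [dotProduct_comm (Φᵀ *ᵥ w) r, dotProduct_transpose_mulVec_eq_zero h, hgram]
  ring

theorem dotProduct_self_sub_transpose_mulVec_eq_sub_of_normal_eq
    (h : Φ *ᵥ (X - Φᵀ *ᵥ θhat) = 0) :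
    (X - Φᵀ *ᵥ θhat) ⬝ᵥ (X - Φᵀ *ᵥ θhat) = X ⬝ᵥ X - X ⬝ᵥ Φᵀ *ᵥ θhat :=
  calc (X - Φᵀ *ᵥ θhat) ⬝ᵥ (X - Φᵀ *ᵥ θhat)
      = X ⬝ᵥ (X - Φᵀ *ᵥ θhat) - (Φᵀ *ᵥ θhat) ⬝ᵥ (X - Φᵀ *ᵥ θhat) := sub_dotProduct ..
    _ = X ⬝ᵥ (X - Φᵀ *ᵥ θhat) := by
      rw [dotProduct_comm (Φᵀ *ᵥ θhat), dotProduct_transpose_mulVec_eq_zero h, sub_zero]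
    _ = X ⬝ᵥ X - X ⬝ᵥ Φᵀ *ᵥ θhat := dotProduct_sub ..

end LeastSquares

theorem PosDef.dotProduct_mulVec_le_one_of_posSemidef_sub_smul {R m : Type*} [Field R]
    [LinearOrder R] [IsStrictOrderedRing R] [StarRing R] [TrivialStar R] [Fintype m]
    {A B : Matrix m m R} (hA : A.PosDef) {c : R} (hAB : (A - c • B).PosSemidef) {v : m → R}
    (hv : v ⬝ᵥ A *ᵥ v ≤ c) : v ⬝ᵥ B *ᵥ v ≤ 1 := by
  have hcB : c * (v ⬝ᵥ B *ᵥ v) ≤ v ⬝ᵥ A *ᵥ v := by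
    simpa only [star_trivial, sub_mulVec, dotProduct_sub, smul_mulVec, dotProduct_smul,
      smul_eq_mul, sub_nonneg] using hAB.dotProduct_mulVec_nonneg v
  rcases eq_or_ne v 0 with rfl | hv0
  · simp
  · have hc : 0 < c :=
      (by simpa using hA.dotProduct_mulVec_pos hv0 : 0 < v ⬝ᵥ A *ᵥ v).trans_le hv
    exact le_of_mul_le_mul_left (by linarith) hc

end Matrix

theorem targeted_exploration_scalar_general (p T : ℕ)
    (Φ : Matrix (Fin p) (Fin T) ℝ) (hΦ : (Φ * Φᵀ).PosDef)
    (X : Fin T → ℝ) (γw : ℝ)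
    (D : Matrix (Fin p) (Fin p) ℝ)
    (θhat : Fin p → ℝ) (hθhat : θhat = (Φ * Φᵀ)⁻¹ *ᵥ (Φ *ᵥ X))
    (hLMI : (Φ * Φᵀ -
        (γw - X ⬝ᵥ X + X ⬝ᵥ (Φᵀ * (Φ * Φᵀ)⁻¹ * Φ) *ᵥ X) • D).PosSemidef)
    (θ : Fin p → ℝ)
    (hθ : ∑ k, (X k - (fun i => Φ i k) ⬝ᵥ θ) ^ 2 ≤ γw) :
    (θ - θhat) ⬝ᵥ D *ᵥ (θ - θhat) ≤ 1 := by
  have hnormal : Φ *ᵥ (X - Φᵀ *ᵥ θhat) = 0 :=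
    hθhat ▸ mulVec_sub_transpose_mulVec_nonsing_inv_eq_zero Φ X
      ((isUnit_iff_isUnit_det _).mp hΦ.isUnit)
  have hres : ∑ k, (X k - (fun i => Φ i k) ⬝ᵥ θ) ^ 2 = (X - Φᵀ *ᵥ θ) ⬝ᵥ (X - Φᵀ *ᵥ θ) := by
    simp only [dotProduct, sq]; rfl
  have hfit : X ⬝ᵥ (Φᵀ * (Φ * Φᵀ)⁻¹ * Φ) *ᵥ X = X ⬝ᵥ Φᵀ *ᵥ θhat := by
    rw [hθhat, mulVec_mulVec, mulVec_mulVec, Matrix.mul_assoc]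
  refine hΦ.dotProduct_mulVec_le_one_of_posSemidef_sub_smul hLMI ?_
  rw [hres, dotProduct_self_sub_transpose_mulVec_eq_add_of_normal_eq hnormal,
    dotProduct_self_sub_transpose_mulVec_eq_sub_of_normal_eq hnormal] at hθ
  rw [hfit]
  linarith

theorem targeted_exploration_scalar (p T : ℕ)
    (Φ : Matrix (Fin p) (Fin T) ℝ) (hΦ : (Φ * Φᵀ).PosDef)
    (X : Fin T → ℝ) (γw : ℝ) (hγw : 0 < γw)
    (D : Matrix (Fin p) (Fin p) ℝ) (hD : D.PosDef)
    (θhat : Fin p → ℝ) (hθhat : θhat = (Φ * Φᵀ)⁻¹ *ᵥ (Φ *ᵥ X))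
    (hLMI : (Φ * Φᵀ -
        (γw - X ⬝ᵥ X + X ⬝ᵥ (Φᵀ * (Φ * Φᵀ)⁻¹ * Φ) *ᵥ X) • D).PosSemidef)
    (θ : Fin p → ℝ)
    (hθ : ∑ k, (X k - (fun i => Φ i k) ⬝ᵥ θ) ^ 2 ≤ γw) :
    (θ - θhat) ⬝ᵥ D *ᵥ (θ - θhat) ≤ 1 :=
  targeted_exploration_scalar_general p T Φ hΦ X γw D θhat hθhat hLMI θ hθ
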